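/- Fix n distinct observed utilities û and capacities with K := k_1+⋯+k_p ≤ n, and let the preference orders σ_1,…,σ_n be i.i.d. from an arbitrary distribution L on strict orders of the p institutions; let M be the unique stable assignment. Let A be the set of the g candidates with the highest observed utilities and B the set of the next m candidates in decreasing order of observed utility (so every candidate of A has larger observed utility than every candidate of B). Then E[π_A(M)]/g ≥ E[π_B(M)]/m, where π_G(M) is the number of candidates in G assigned by M to their top-choice institution. -/

import Mathlib

open MeasureTheory Finset

/-- The set of candidates assigned to institution `ℓ` by the (partial) assignment `M`. -/
def assignedTo {n p : ℕ} (M : Fin n → Option (Fin p)) (ℓ : Fin p) : Finset (Fin n) :=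
  Finset.univ.filter fun i => M i = some ℓ

/-- `M` is an assignment respecting the capacities `k`. -/
def IsAssignment {n p : ℕ} (k : Fin p → ℕ) (M : Fin n → Option (Fin p)) : Prop :=
  ∀ ℓ : Fin p, (assignedTo M ℓ).card ≤ k ℓ

/-- Candidate with preference order `σi` (a ranking of the institutions, smaller rank = more
preferred) strictly prefers institution `j` to the current assignment `cur`; an unassigned
candidate strictly prefers every institution to being unassigned. -/
def Prefers {p : ℕ} (σi : Equiv.Perm (Fin p)) (j : Fin p) : Option (Fin p) → Prop
  | none => True
  | some j' => σi j < σi j'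

/-- The candidate–institution pair `(i, j)` blocks the assignment `M`. -/
def Blocks {n p : ℕ} (uhat : Fin n → ℝ) (σ : Fin n → Equiv.Perm (Fin p))
    (k : Fin p → ℕ) (M : Fin n → Option (Fin p)) (i : Fin n) (j : Fin p) : Prop :=
  M i ≠ some j ∧ Prefers (σ i) j (M i) ∧
    ((assignedTo M j).card < k j ∨ ∃ i' ∈ assignedTo M j, uhat i' < uhat i)

/-- `M` is a stable assignment: it respects capacities and no pair blocks it. -/
def IsStable {n p : ℕ} (uhat : Fin n → ℝ) (σ : Fin n → Equiv.Perm (Fin p))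
    (k : Fin p → ℕ) (M : Fin n → Option (Fin p)) : Prop :=
  IsAssignment k M ∧ ∀ i j, ¬ Blocks uhat σ k M i j

/-- Candidate `i` is assigned by `M` to the top institution of its preference order. -/
def TopChoice {n p : ℕ} (σ : Fin n → Equiv.Perm (Fin p)) (M : Fin n → Option (Fin p))
    (i : Fin n) : Prop :=
  ∃ j, M i = some j ∧ ∀ j', σ i j ≤ σ i j'

open scoped Classical in
/-- The number of candidates in `G` assigned by `M` to their top-choice institution. -/
noncomputable def assignedTop {n p : ℕ} (σ : Fin n → Equiv.Perm (Fin p))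
    (M : Fin n → Option (Fin p)) (G : Finset (Fin n)) : ℕ :=
  (G.filter fun i => TopChoice σ M i).card

/-- Preference orders form a finite type; we endow it with the discrete σ-algebra. -/
instance {p : ℕ} : MeasurableSpace (Equiv.Perm (Fin p)) := ⊤
/-- The set of the `K` candidates with the largest values of `x` (assuming the values of
`x` are pairwise distinct): `i` belongs to `topK K x` iff at most `K` candidates `j`
(including `i` itself) satisfy `x i ≤ x j`. -/
noncomputable def topK {n : ℕ} (K : ℕ) (x : Fin n → ℝ) : Finset (Fin n) :=
  Finset.univ.filter fun i => (Finset.univ.filter fun j => x i ≤ x j).card ≤ K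

open ProbabilityTheory

/-!
The unique stable assignment is serial dictatorship: in decreasing order of observed utility,
every candidate takes its favourite institution among those with a seat left. Hence a candidate
gets its top choice exactly when that institution still has a seat after the candidates above it
have been served. If a candidate `i₂` gets its top choice under some preference profile, then any
better candidate `i` gets its top choice under the profile in which `i` and `i₂` exchange their
preferences: `i` then wants the same institution and competes with fewer candidates, whose own
choices do not see the exchange. Since i.i.d. preferences are exchangeable, the probability of
getting one's top choice thus decreases along the utility order, and the average of a decreasing
sequence over a block of ranks dominates its average over any later block.
-/

section SerialDictatorship

variable {n p : ℕ}

noncomputable def bestIn (e : Equiv.Perm (Fin p)) (S : Finset (Fin p)) : Option (Fin p) :=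
  if h : S.Nonempty then some (e.symm ((S.image e).min' (h.image e))) else none

theorem bestIn_eq_some_iff {e : Equiv.Perm (Fin p)} {S : Finset (Fin p)} {j : Fin p} :
    bestIn e S = some j ↔ j ∈ S ∧ ∀ j' ∈ S, e j ≤ e j' := by
  unfold bestIn
  split_ifs with hS
  · rw [Option.some_inj, Equiv.symm_apply_eq]
    constructor
    · intro h
      refine ⟨e.injective.mem_finset_image.1 (h ▸ min'_mem _ _), fun j' hj' => ?_⟩
      exact h ▸ min'_le _ _ (mem_image_of_mem e hj')
    · rintro ⟨hj, hmin⟩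
      refine le_antisymm (min'_le _ _ (mem_image_of_mem e hj)) (le_min' _ _ _ ?_)
      intro y hy
      obtain ⟨j', hj', rfl⟩ := mem_image.1 hy
      exact hmin j' hj'
  · simp only [false_iff, not_and]
    exact fun hj => absurd ⟨j, hj⟩ hS

theorem bestIn_eq_none_iff {e : Equiv.Perm (Fin p)} {S : Finset (Fin p)} :
    bestIn e S = none ↔ S = ∅ := by
  simp [bestIn, Finset.not_nonempty_iff_eq_empty]

variable (uhat : Fin n → ℝ) (k : Fin p → ℕ)

noncomputable def above (i : Fin n) : Finset (Fin n) :=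
  univ.filter fun i' => uhat i < uhat i'

variable {uhat} in
theorem mem_above {i i' : Fin n} : i' ∈ above uhat i ↔ uhat i < uhat i' := by
  simp [above]

variable {uhat} in
theorem above_ssubset_above {i i' : Fin n} (h : i' ∈ above uhat i) :
    above uhat i' ⊂ above uhat i := by
  refine ssubset_iff_of_subset (fun x hx => ?_) |>.2 ⟨i', h, fun h' => ?_⟩
  · exact mem_above.2 ((mem_above.1 h).trans (mem_above.1 hx))
  · exact lt_irrefl _ (mem_above.1 h')

noncomputable def vacant (M : Fin n → Option (Fin p)) (i : Fin n) : Finset (Fin p) :=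
  univ.filter fun j => ((above uhat i).filter fun i' => M i' = some j).card < k j

noncomputable def serialDictatorship (σ : Fin n → Equiv.Perm (Fin p)) (i : Fin n) :
    Option (Fin p) :=
  bestIn (σ i) <| univ.filter fun j =>
    ((above uhat i).attach.filter fun i' => serialDictatorship σ i'.1 = some j).card < k j
termination_by (above uhat i).card
decreasing_by
  all_goals exact card_lt_card (above_ssubset_above (Subtype.prop _))

def IsSerialDictatorship (σ : Fin n → Equiv.Perm (Fin p)) (M : Fin n → Option (Fin p)) :
    Prop :=
  ∀ i, M i = bestIn (σ i) (vacant uhat k M i)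

theorem isSerialDictatorship_serialDictatorship (σ : Fin n → Equiv.Perm (Fin p)) :
    IsSerialDictatorship uhat k σ (serialDictatorship uhat k σ) := by
  intro i
  rw [serialDictatorship, vacant]
  congr 3 with j
  rw [filter_attach (fun i' => serialDictatorship uhat k σ i' = some j), card_map, card_attach]

variable {uhat k}

theorem vacant_congr {M M' : Fin n → Option (Fin p)} {i : Fin n}
    (h : ∀ i' ∈ above uhat i, M i' = M' i') : vacant uhat k M i = vacant uhat k M' i := by
  unfold vacant
  congr! 3 with j
  exact filter_congr fun i' hi' => by rw [h i' hi']

theorem vacant_subset_vacant {M : Fin n → Option (Fin p)} {i i' : Fin n}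
    (h : uhat i' ≤ uhat i) : vacant uhat k M i' ⊆ vacant uhat k M i := by
  intro j hj
  simp only [vacant, mem_filter, mem_univ, true_and] at hj ⊢
  refine lt_of_le_of_lt (card_le_card (filter_subset_filter _ fun x hx => ?_)) hj
  exact mem_above.2 (h.trans_lt (mem_above.1 hx))

theorem IsSerialDictatorship.apply_eq_apply {σ σ' : Fin n → Equiv.Perm (Fin p)}
    {M M' : Fin n → Option (Fin p)} (hM : IsSerialDictatorship uhat k σ M)
    (hM' : IsSerialDictatorship uhat k σ' M') (i : Fin n)
    (hσ : ∀ i', uhat i ≤ uhat i' → σ i' = σ' i') : M i = M' i := by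
  induction i using (measure fun i => (above uhat i).card).wf.induction with
  | h i ih =>
    rw [hM i, hM' i, hσ i le_rfl, vacant_congr fun i' hi' => ?_]
    exact ih i' (card_lt_card (above_ssubset_above hi'))
      fun i'' h'' => hσ i'' ((mem_above.1 hi').le.trans h'')

end SerialDictatorship

section Stability

variable {n p : ℕ} {uhat : Fin n → ℝ} {k : Fin p → ℕ} {σ : Fin n → Equiv.Perm (Fin p)}
  {M : Fin n → Option (Fin p)}

theorem IsAssignment.mem_vacant (hM : IsAssignment k M) {i : Fin n} {j : Fin p}
    (h : M i = some j) : j ∈ vacant uhat k M i := by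
  have hsub : insert i ((above uhat i).filter fun i' => M i' = some j) ⊆ assignedTo M j := by
    intro x hx
    rcases mem_insert.1 hx with rfl | hx
    · simpa [assignedTo] using h
    · simpa [assignedTo] using (mem_filter.1 hx).2
  have hi : i ∉ (above uhat i).filter fun i' => M i' = some j :=
    fun hi => lt_irrefl _ (mem_above.1 (mem_filter.1 hi).1)
  have hcard := (card_le_card hsub).trans (hM j)
  rw [card_insert_of_notMem hi] at hcard
  simpa [vacant] using hcard

theorem blocks_of_mem_vacant (huhat : Function.Injective uhat) {i : Fin n} {j : Fin p}
    (hj : j ∈ vacant uhat k M i) (hne : M i ≠ some j) (hpref : Prefers (σ i) j (M i)) :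
    Blocks uhat σ k M i j := by
  refine ⟨hne, hpref, or_iff_not_imp_right.2 fun hlow => ?_⟩
  push Not at hlow
  refine lt_of_le_of_lt (card_le_card fun x hx => ?_) (mem_filter.1 hj).2
  have hxj : M x = some j := by simpa [assignedTo] using hx
  refine mem_filter.2 ⟨mem_above.2 ((hlow x hx).lt_of_ne fun hix => hne ?_), hxj⟩
  rwa [huhat hix]

theorem IsStable.isSerialDictatorship (huhat : Function.Injective uhat)
    (hM : IsStable uhat σ k M) : IsSerialDictatorship uhat k σ M := by
  intro i
  cases hMi : M i with
  | none =>
    refine (bestIn_eq_none_iff.2 (eq_empty_of_forall_notMem fun j hj => hM.2 i j ?_)).symm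
    exact blocks_of_mem_vacant huhat hj (by simp [hMi]) (by simp [hMi, Prefers])
  | some j =>
    refine (bestIn_eq_some_iff.2 ⟨hM.1.mem_vacant hMi, fun j' hj' => ?_⟩).symm
    refine not_lt.1 fun hlt => hM.2 i j' (blocks_of_mem_vacant huhat hj' ?_ (by rwa [hMi]))
    rw [hMi, Ne, Option.some_inj]
    rintro rfl
    exact lt_irrefl _ hlt

theorem IsStable.eq_serialDictatorship (huhat : Function.Injective uhat)
    (hM : IsStable uhat σ k M) : M = serialDictatorship uhat k σ :=
  funext fun i => (hM.isSerialDictatorship huhat).apply_eq_apply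
    (isSerialDictatorship_serialDictatorship uhat k σ) i fun _ _ => rfl

theorem IsSerialDictatorship.topChoice_iff (hM : IsSerialDictatorship uhat k σ M) (i : Fin n) :
    TopChoice σ M i ↔ ∃ j, (∀ j', σ i j ≤ σ i j') ∧ j ∈ vacant uhat k M i := by
  simp only [TopChoice, hM i, bestIn_eq_some_iff]
  exact ⟨fun ⟨j, ⟨hj, _⟩, htop⟩ => ⟨j, htop, hj⟩,
    fun ⟨j, htop, hj⟩ => ⟨j, ⟨hj, fun j' _ => htop j'⟩, htop⟩⟩

/-- `i` competes with a subset of `i₂`'s competitors, whose choices do not see the exchange. -/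
theorem IsSerialDictatorship.topChoice_swap {M' : Fin n → Option (Fin p)} {i i₂ : Fin n}
    (h : uhat i₂ < uhat i) (hM : IsSerialDictatorship uhat k σ M)
    (hM' : IsSerialDictatorship uhat k (σ ∘ Equiv.swap i i₂) M') (htop : TopChoice σ M i₂) :
    TopChoice (σ ∘ Equiv.swap i i₂) M' i := by
  obtain ⟨j, hjtop, hj⟩ := (hM.topChoice_iff i₂).1 htop
  refine (hM'.topChoice_iff i).2 ⟨j, by simpa using hjtop, ?_⟩
  rw [vacant_congr fun i' hi' => hM'.apply_eq_apply hM i' fun i'' hi'' => ?_]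
  · exact vacant_subset_vacant h.le hj
  · have hlt : uhat i < uhat i'' := (mem_above.1 hi').trans_le hi''
    rw [Function.comp_apply, Equiv.swap_apply_of_ne_of_ne]
    · rintro rfl; exact lt_irrefl _ hlt
    · rintro rfl; exact lt_asymm h hlt

end Stability

section Rank

variable {n : ℕ}

/-- Counted from `1`: the candidate with the largest observed utility has rank `1`. -/
noncomputable def rank (uhat : Fin n → ℝ) (i : Fin n) : ℕ :=
  (univ.filter fun j => uhat i ≤ uhat j).card

variable {uhat : Fin n → ℝ}

theorem mem_topK {K : ℕ} {i : Fin n} : i ∈ topK K uhat ↔ rank uhat i ≤ K := by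
  simp [topK, rank]

theorem rank_le_rank {i i' : Fin n} (h : uhat i ≤ uhat i') : rank uhat i' ≤ rank uhat i :=
  card_le_card (monotone_filter_right _ fun _ _ hj => h.trans hj)

theorem rank_lt_rank {i i' : Fin n} (h : uhat i < uhat i') : rank uhat i' < rank uhat i :=
  card_lt_card <| ssubset_iff_of_subset (monotone_filter_right _ fun _ _ hj => h.le.trans hj)
    |>.2 ⟨i, by simp, by simpa using h⟩

theorem topK_mono {K K' : ℕ} (h : K ≤ K') : topK K uhat ⊆ topK K' uhat :=
  fun _ hi => mem_topK.2 ((mem_topK.1 hi).trans h)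

theorem lt_of_mem_topK_of_notMem_topK {K : ℕ} {i i' : Fin n} (hi : i ∈ topK K uhat)
    (hi' : i' ∉ topK K uhat) : uhat i' < uhat i := by
  rw [mem_topK] at hi hi'
  exact not_le.1 fun h => hi' ((rank_le_rank h).trans hi)

theorem rank_injective (huhat : Function.Injective uhat) : Function.Injective (rank uhat) := by
  intro i i' h
  rcases lt_trichotomy (uhat i) (uhat i') with hlt | heq | hlt
  · exact absurd h (rank_lt_rank hlt).ne'
  · exact huhat heq
  · exact absurd h (rank_lt_rank hlt).ne

theorem image_rank (huhat : Function.Injective uhat) : univ.image (rank uhat) = Icc 1 n := by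
  refine eq_of_subset_of_card_le (fun r hr => ?_) ?_
  · obtain ⟨i, -, rfl⟩ := mem_image.1 hr
    exact mem_Icc.2 ⟨card_pos.2 ⟨i, by simp⟩, (card_filter_le _ _).trans (by simp)⟩
  · rw [card_image_of_injective _ (rank_injective huhat)]
    simp

theorem card_topK (huhat : Function.Injective uhat) {K : ℕ} (hK : K ≤ n) :
    (topK K uhat).card = K := by
  have htopK : topK K uhat = univ.filter fun i => rank uhat i ≤ K := by
    ext i
    simp [mem_topK]
  have himage : (topK K uhat).image (rank uhat) = Icc 1 K := by
    rw [htopK, ← filter_image (p := (· ≤ K)), image_rank huhat]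
    ext r
    simp only [mem_filter, mem_Icc]
    omega
  rw [← card_image_of_injective _ (rank_injective huhat), himage, Nat.card_Icc,
    Nat.add_sub_cancel]

end Rank

section Probability

variable {ι β : Type*} [MeasurableSpace β]

theorem Finset.sum_div_card_le_sum_div_card_of_forall_le {A B : Finset ι} (f : ι → ℝ)
    (hA : A.Nonempty) (hB : B.Nonempty) (h : ∀ a ∈ A, ∀ b ∈ B, f b ≤ f a) :
    (∑ b ∈ B, f b) / #B ≤ (∑ a ∈ A, f a) / #A := by
  rw [div_le_div_iff₀ (Nat.cast_pos.2 hB.card_pos) (Nat.cast_pos.2 hA.card_pos)]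
  calc (∑ b ∈ B, f b) * #A = ∑ b ∈ B, ∑ _a ∈ A, f b := by simp [sum_mul, mul_comm]
    _ ≤ ∑ b ∈ B, ∑ a ∈ A, f a := sum_le_sum fun b hb => sum_le_sum fun a ha => h a ha b hb
    _ = (∑ a ∈ A, f a) * #B := by rw [sum_comm]; simp [sum_mul, mul_comm]

open scoped Classical in
theorem MeasureTheory.integral_natCast_card_filter {α : Type*} [MeasurableSpace α]
    [DiscreteMeasurableSpace α] [Finite α] (ν : Measure α) [IsFiniteMeasure ν] (G : Finset ι)
    (P : ι → α → Prop) :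
    ∫ a, ((G.filter fun i => P i a).card : ℝ) ∂ν = ∑ i ∈ G, ν.real {a | P i a} := by
  simp_rw [natCast_card_filter]
  rw [integral_finsetSum _ fun _ _ => .of_finite]
  refine sum_congr rfl fun i _ => ?_
  rw [← integral_indicator_one (MeasurableSet.of_discrete)]
  congr with a

variable [Fintype ι]

theorem ProbabilityTheory.iIndepFun.map_fun_eq_pi {Ω : Type*} [MeasurableSpace Ω]
    {μ : Measure Ω} {L : Measure β} [NeZero L] {X : ι → Ω → β} (h : iIndepFun X μ)
    (hlaw : ∀ i, μ.map (X i) = L) :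
    μ.map (fun ω i => X i ω) = Measure.pi fun _ => L := by
  rw [h.map_fun_eq_pi_map fun i => .of_map_ne_zero (hlaw i ▸ NeZero.ne L)]
  simp_rw [hlaw]

theorem MeasureTheory.measurePreserving_comp_perm (L : Measure β) [SigmaFinite L]
    (e : Equiv.Perm ι) :
    MeasurePreserving (fun c : ι → β => c ∘ e)
      (Measure.pi fun _ => L) (Measure.pi fun _ => L) :=
  measurePreserving_arrowCongr' _ _ e.symm (MeasurableEquiv.refl β) fun _ => .id L

end Probability

section TopChoiceProbability

variable {n p : ℕ} (L : Measure (Equiv.Perm (Fin p))) (uhat : Fin n → ℝ) (k : Fin p → ℕ)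

noncomputable def topChoiceProb (i : Fin n) : ℝ :=
  (Measure.pi fun _ : Fin n => L).real {c | TopChoice c (serialDictatorship uhat k c) i}

variable [IsProbabilityMeasure L] {uhat}

/-- Exchanging the preferences of `i` and `i₂` preserves the law of the profile. -/
theorem topChoiceProb_le_topChoiceProb {i i₂ : Fin n} (h : uhat i₂ < uhat i) :
    topChoiceProb L uhat k i₂ ≤ topChoiceProb L uhat k i :=
  calc topChoiceProb L uhat k i₂
      ≤ (Measure.pi fun _ => L).real ((fun c => c ∘ Equiv.swap i i₂) ⁻¹'
          {c | TopChoice c (serialDictatorship uhat k c) i}) :=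
        measureReal_mono fun c hc =>
          (isSerialDictatorship_serialDictatorship uhat k c).topChoice_swap h
            (isSerialDictatorship_serialDictatorship uhat k _) hc
    _ = topChoiceProb L uhat k i :=
        (measurePreserving_comp_perm L _).measureReal_preimage
          MeasurableSet.of_discrete.nullMeasurableSet

theorem integral_assignedTop {Ω : Type*} [MeasurableSpace Ω] {μ : Measure Ω}
    (huhat : Function.Injective uhat) {σ : Fin n → Ω → Equiv.Perm (Fin p)}
    (hindep : iIndepFun σ μ) (hlaw : ∀ i, μ.map (σ i) = L)
    {M : Ω → Fin n → Option (Fin p)}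
    (hM : ∀ ω, IsStable uhat (fun i => σ i ω) k (M ω)) (G : Finset (Fin n)) :
    ∫ ω, (assignedTop (fun i => σ i ω) (M ω) G : ℝ) ∂μ =
      ∑ i ∈ G, topChoiceProb L uhat k i := by
  have hlawProfile := hindep.map_fun_eq_pi hlaw
  simp_rw [fun ω => (hM ω).eq_serialDictatorship huhat]
  rw [← integral_map (φ := fun ω i => σ i ω)
    (f := fun c => (assignedTop c (serialDictatorship uhat k c) G : ℝ))
    (.of_map_ne_zero (hlawProfile ▸ NeZero.ne _)) Measurable.of_discrete.aestronglyMeasurable,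
    hlawProfile]
  exact integral_natCast_card_filter _ G _

end TopChoiceProbability

theorem expected_top_choice_rate_monotone_general
    (n p : ℕ) (k : Fin p → ℕ)
    (uhat : Fin n → ℝ) (huhat : Function.Injective uhat)
    (g m : ℕ) (hg : 0 < g) (hm : 0 < m) (hgm : g + m ≤ n)
    (Ω : Type) [MeasurableSpace Ω] (μ : Measure Ω)
    (L : Measure (Equiv.Perm (Fin p))) [IsProbabilityMeasure L]
    (σ : Fin n → Ω → Equiv.Perm (Fin p))
    (hindep : iIndepFun σ μ)
    (hlaw : ∀ i, Measure.map (σ i) μ = L)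
    (M : Ω → Fin n → Option (Fin p))
    (hM : ∀ ω, IsStable uhat (fun i => σ i ω) k (M ω)) :
    (∫ ω, (assignedTop (fun i => σ i ω) (M ω) (topK g uhat) : ℝ) ∂μ) / g
      ≥ (∫ ω, (assignedTop (fun i => σ i ω) (M ω)
            (topK (g + m) uhat \ topK g uhat) : ℝ) ∂μ) / m := by
  have hA : (topK g uhat).card = g := card_topK huhat (by omega)
  have hB : (topK (g + m) uhat \ topK g uhat).card = m := by
    rw [card_sdiff_of_subset (topK_mono (by omega)), card_topK huhat hgm, hA]
    omega
  have hrate := sum_div_card_le_sum_div_card_of_forall_le (topChoiceProb L uhat k)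
    (card_pos.1 (hA ▸ hg)) (card_pos.1 (hB ▸ hm)) fun i hi i₂ hi₂ =>
      topChoiceProb_le_topChoiceProb L k (lt_of_mem_topK_of_notMem_topK hi (mem_sdiff.1 hi₂).2)
  rwa [hA, hB, ← integral_assignedTop L k huhat hindep hlaw hM,
    ← integral_assignedTop L k huhat hindep hlaw hM] at hrate

/-- With fixed distinct observed utilities, capacities `K ≤ n`, and
preference orders i.i.d. from an arbitrary distribution `L`, let `M` be the unique
stable assignment, `A` the set of the `g` candidates with the highest observed utilities
and `B` the set of the next `m` candidates. Then
`E[π_A(M)]/g ≥ E[π_B(M)]/m`. -/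
theorem expected_top_choice_rate_monotone
    (n p K : ℕ) (hp : 1 ≤ p)
    (k : Fin p → ℕ) (hK : ∑ ℓ, k ℓ = K) (hKn : K ≤ n)
    (uhat : Fin n → ℝ) (huhat : Function.Injective uhat)
    (g m : ℕ) (hg : 0 < g) (hm : 0 < m) (hgm : g + m ≤ n)
    (Ω : Type) [MeasurableSpace Ω] (μ : Measure Ω) [IsProbabilityMeasure μ]
    (L : Measure (Equiv.Perm (Fin p))) [IsProbabilityMeasure L]
    (σ : Fin n → Ω → Equiv.Perm (Fin p))
    (hindep : iIndepFun σ μ)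
    (hlaw : ∀ i, Measure.map (σ i) μ = L)
    (M : Ω → Fin n → Option (Fin p))
    (hM : ∀ ω, IsStable uhat (fun i => σ i ω) k (M ω)) :
    (∫ ω, (assignedTop (fun i => σ i ω) (M ω) (topK g uhat) : ℝ) ∂μ) / g
      ≥ (∫ ω, (assignedTop (fun i => σ i ω) (M ω)
            (topK (g + m) uhat \ topK g uhat) : ℝ) ∂μ) / m :=
  expected_top_choice_rate_monotone_general n p k uhat huhat g m hg hm hgm Ω μ L σ hindep hlaw M hM
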